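/- Let G be a topological abelian group such that every countable subgroup of G is h-embedded in G. Then every compact subset of G is finite. -/

import Mathlib

open Topology Filter Set

noncomputable section

/-- A topological space is *pseudocompact* if every continuous real-valued function
defined on it is bounded. -/
def IsPseudocompact (X : Type*) [TopologicalSpace X] : Prop :=
  ∀ f : X → ℝ, Continuous f → Bornology.IsBounded (Set.range f)

/-- A subgroup `D` of a topological abelian group `G` is *h-embedded* in `G` if every
(not necessarily continuous) homomorphism from `D` to the circle group extends to a
continuous homomorphism from `G` to the circle group. -/
def IsHEmbedded {G : Type*} [CommGroup G] [TopologicalSpace G] (D : Subgroup G) : Prop :=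
  ∀ f : D →* Circle, ∃ g : G →* Circle, Continuous g ∧ ∀ x : D, g x = f x

/-- The canonical evaluation homomorphism `α_G : G → G^∧∧`, `α_G(x)(χ) = χ(x)`,
where the dual groups carry the compact-open topology.  `G` is *reflexive* when this
map is a topological isomorphism, i.e. `IsHomeomorph ⇑(pontrEval G)`. -/
def pontrEval (G : Type*) [CommGroup G] [TopologicalSpace G] :
    G →* PontryaginDual (PontryaginDual G) where
  toFun x :=
    { toFun := fun χ => χ x
      map_one' := rfl
      map_mul' := fun χ ψ => rfl
      continuous_toFun := by
        have h : Continuous fun χ : PontryaginDual G => χ.toContinuousMap x :=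
          (continuous_eval_const x).comp
            (ContinuousMonoidHom.isInducing_toContinuousMap G Circle).continuous
        exact h }
  map_one' := ContinuousMonoidHom.ext fun χ => map_one χ
  map_mul' x y := ContinuousMonoidHom.ext fun χ => map_mul χ x y


/-!
Countable subgroups are closed: if `x` lies in the closure of a countable subgroup `D` but not in
`D`, a character of `⟨D, x⟩` trivial on `D` but not at `x` extends to a continuous character,
which then has to be trivial at `x` as well.

A discrete abelian group has no nontrivial sequence converging in its Bohr topology: integrating
`χ ↦ χ (e j)` against the Haar measure of the compact group of all its characters gives `0`
whenever `e j ≠ 1`, but tends to `1` by dominated convergence. Since every character of an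
h-embedded subgroup extends continuously, an injective sequence `c` in a compact set `K` has no
subsequence converging to a point of the countable subgroup `D` it generates. Passing to nested
subsequences that avoid a neighbourhood of the `n`-th point of `D` at stage `n`, compactness yields
a cluster point of `c` outside `D`, although `D` is closed.
-/

open MeasureTheory

theorem Subgroup.countable_closure {G : Type*} [Group G] {s : Set G} (hs : s.Countable) :
    (closure s : Set G).Countable := by
  have := hs.to_subtype
  rw [FreeGroup.closure_eq_range, MonoidHom.coe_range]
  exact countable_range _

namespace AddCircle

def ratCastHom : AddCircle (1 : ℚ) →+ AddCircle (1 : ℝ) :=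
  QuotientAddGroup.map _ _ (Rat.castHom ℝ).toAddMonoidHom <|
    AddSubgroup.zmultiples_le.mpr <| by simp

theorem ratCastHom_injective : Function.Injective ratCastHom := by
  refine (injective_iff_map_eq_zero _).mpr fun x hx => ?_
  induction x using QuotientAddGroup.induction_on with
  | H q =>
    obtain ⟨n, hn⟩ := (coe_eq_zero_iff (1 : ℝ) (x := q)).mp hx
    exact (coe_eq_zero_iff 1).mpr ⟨n, by simp only [zsmul_one] at hn ⊢; exact_mod_cast hn⟩

end AddCircle

theorem exists_monoidHom_circle_apply_ne_one {A : Type*} [CommGroup A] {a : A} (ha : a ≠ 1) :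
    ∃ φ : A →* Circle, φ a ≠ 1 := by
  obtain ⟨c, hc⟩ := CharacterModule.exists_character_apply_ne_zero_of_ne_zero
    (A := Additive A) (a := Additive.ofMul a) ha
  refine ⟨MonoidHom.mk' (fun x => AddCircle.toCircle (AddCircle.ratCastHom (c (.ofMul x))))
    fun x y => by simp only [ofMul_mul, map_add, AddCircle.toCircle_add], fun h => hc ?_⟩
  refine AddCircle.ratCastHom_injective (AddCircle.injective_toCircle one_ne_zero ?_)
  simpa using h

theorem integral_coe_monoidHom_circle_eq_zero {H : Type*} [Group H] [MeasurableSpace H]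
    [MeasurableMul H] (μ : Measure H) [μ.IsMulLeftInvariant] (χ : H →* Circle) {h : H}
    (hχ : χ h ≠ 1) : ∫ x, (χ x : ℂ) ∂μ = 0 := by
  have htrans : ∫ x, (χ (h * x) : ℂ) ∂μ = ∫ x, (χ x : ℂ) ∂μ :=
    integral_mul_left_eq_self (fun x => (χ x : ℂ)) h
  simp only [map_mul, Circle.coe_mul, integral_const_mul] at htrans
  have hχ' : (χ h : ℂ) ≠ 1 := by simpa [Circle.coe_eq_one] using hχ
  by_contra hne
  exact hχ' (mul_right_cancel₀ hne (htrans.trans (one_mul _).symm))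

theorem exists_monoidHom_circle_not_tendsto_one {A ι : Type*} [CommGroup A] {L : Filter ι}
    [L.NeBot] [L.IsCountablyGenerated] {e : ι → A} (he : ∀ᶠ i in L, e i ≠ 1) :
    ∃ φ : A →* Circle, ¬Tendsto (fun i => φ (e i)) L (𝓝 1) := by
  by_contra! hconv
  let S : Subgroup (A → Circle) := (MonoidHom.coeFn A Circle).range
  have : CompactSpace S :=
    isCompact_iff_compactSpace.mp (MonoidHom.isClosed_range_coe A Circle).isCompact
  borelize ↥S
  let μ : Measure S := Measure.haarMeasure ⊤
  have : IsProbabilityMeasure μ := ⟨Measure.haarMeasure_self⟩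
  let ev (a : A) : S →* Circle := (Pi.evalMonoidHom (fun _ => Circle) a).comp S.subtype
  have hev (a : A) : Continuous (ev a) := (continuous_apply a).comp continuous_subtype_val
  have hzero : ∀ᶠ i in L, ∫ f, (ev (e i) f : ℂ) ∂μ = 0 := he.mono fun i hi => by
    obtain ⟨φ, hφ⟩ := exists_monoidHom_circle_apply_ne_one hi
    exact integral_coe_monoidHom_circle_eq_zero μ (ev (e i)) (h := ⟨φ, φ, rfl⟩) hφ
  have hone : Tendsto (fun i => ∫ f, (ev (e i) f : ℂ) ∂μ) L (𝓝 (∫ _, (1 : ℂ) ∂μ)) := by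
    refine tendsto_integral_filter_of_dominated_convergence (fun _ => 1)
      (.of_forall fun i => (continuous_subtype_val.comp (hev (e i))).aestronglyMeasurable)
      (.of_forall fun i => .of_forall fun f => (Circle.norm_coe _).le) (integrable_const 1)
      (.of_forall fun ⟨_, φ, rfl⟩ => ?_)
    rw [← Circle.coe_one]
    exact (continuous_subtype_val.tendsto 1).comp (hconv φ)
  rw [integral_const, probReal_univ, one_smul] at hone
  exact one_ne_zero (tendsto_nhds_unique (hone.congr' hzero) tendsto_const_nhds)

namespace IsHEmbedded

variable {G : Type*} [CommGroup G] [TopologicalSpace G] {D H : Subgroup G}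

theorem not_tendsto (hD : IsHEmbedded D) {ι : Type*} {L : Filter ι} [L.NeBot]
    [L.IsCountablyGenerated] {c : ι → G} {y : G} (hc : ∀ i, c i ∈ D) (hy : y ∈ D)
    (hne : ∀ᶠ i in L, c i ≠ y) : ¬Tendsto c L (𝓝 y) := by
  intro hlim
  let e (i : ι) : D := ⟨c i, hc i⟩ * ⟨y, hy⟩⁻¹
  obtain ⟨φ, hφ⟩ := exists_monoidHom_circle_not_tendsto_one (e := e) <|
    hne.mono fun i hi => by simpa [e, mul_inv_eq_one, Subtype.ext_iff] using hi
  obtain ⟨g, hg, hgφ⟩ := hD φ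
  have hlim' : Tendsto (fun i => g (c i) * (g y)⁻¹) L (𝓝 1) := by
    simpa using ((hg.tendsto y).comp hlim).mul_const (g y)⁻¹
  exact hφ (hlim'.congr fun i => by simp [e, ← hgφ])

theorem exists_continuous_eq_one_ne_one (hH : IsHEmbedded H) (hDH : D ≤ H) {x : G}
    (hxH : x ∈ H) (hxD : x ∉ D) :
    ∃ g : G →* Circle, Continuous g ∧ (∀ y ∈ D, g y = 1) ∧ g x ≠ 1 := by
  obtain ⟨φ, hφ⟩ := exists_monoidHom_circle_apply_ne_one
    (a := ((⟨x, hxH⟩ : H) : H ⧸ D.subgroupOf H))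
    (by rwa [Ne, QuotientGroup.eq_one_iff, Subgroup.mem_subgroupOf])
  obtain ⟨g, hg, hgφ⟩ := hH (φ.comp (QuotientGroup.mk' _))
  refine ⟨g, hg, fun y hy => ?_, by rwa [hgφ ⟨x, hxH⟩]⟩
  rw [hgφ ⟨y, hDH hy⟩, MonoidHom.comp_apply, QuotientGroup.mk'_apply,
    (QuotientGroup.eq_one_iff _).mpr (Subgroup.mem_subgroupOf.mpr hy), map_one]

end IsHEmbedded

theorem Subgroup.isClosed_of_forall_countable_isHEmbedded {G : Type*} [CommGroup G]
    [TopologicalSpace G] (hemb : ∀ H : Subgroup G, (H : Set G).Countable → IsHEmbedded H) {D : Subgroup G}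
    (hD : (D : Set G).Countable) : IsClosed (D : Set G) := by
  refine isClosed_of_closure_subset fun x hx => ?_
  by_contra hxD
  let H := closure (insert x (D : Set G))
  obtain ⟨g, hg, hgD, hgx⟩ :=
    (hemb H (countable_closure (hD.insert x))).exists_continuous_eq_one_ne_one
      (fun y hy => subset_closure (mem_insert_of_mem x hy)) (subset_closure (mem_insert x _)) hxD
  exact hgx (closure_minimal hgD (isClosed_eq hg continuous_const) hx)

theorem IsCompact.exists_mem_closure_range_notMem {X : Type*} [TopologicalSpace X] {K : Set X}
    (hK : IsCompact K) {c : ℕ → X} (hcK : ∀ n, c n ∈ K) {S : Set X} (hS : S.Countable)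
    (hc : ∀ J : Set ℕ, J.Infinite → ∀ y ∈ S, ¬Tendsto c (cofinite ⊓ 𝓟 J) (𝓝 y)) :
    ∃ x ∈ closure (range c), x ∉ S := by
  rcases S.eq_empty_or_nonempty with rfl | hSne
  · exact ⟨c 0, subset_closure (mem_range_self 0), notMem_empty _⟩
  obtain ⟨d, rfl⟩ := hS.exists_eq_range hSne
  have step (J : {J : Set ℕ // J.Infinite}) (n : ℕ) :
      ∃ J' : {J : Set ℕ // J.Infinite}, J'.1 ⊆ J.1 ∧ ∃ U ∈ 𝓝 (d n), ∀ j ∈ J'.1, c j ∉ U := by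
    obtain ⟨U, hU, hcU⟩ :=
      not_forall₂.mp (mt tendsto_def.mpr (hc J.1 J.2 (d n) (mem_range_self n)))
    rw [mem_inf_principal, mem_cofinite] at hcU
    exact ⟨⟨{j | j ∈ J.1 ∧ c j ∉ U}, by simpa [compl_ofPred, Classical.not_imp] using hcU⟩,
      fun j hj => hj.1, U, hU, fun j hj => hj.2⟩
  choose next hnext U hU hcU using step
  let J (n : ℕ) : {J : Set ℕ // J.Infinite} :=
    Nat.rec ⟨univ, infinite_univ⟩ (fun n Jn => next Jn n) n
  have hJ : Antitone fun n => 𝓟 (J n).1 :=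
    antitone_nat_of_succ_le fun n => principal_mono.mpr (hnext (J n) n)
  have : (⨅ n, 𝓟 (J n).1).NeBot :=
    iInf_neBot_of_directed hJ.directed_ge fun n => principal_neBot_iff.mpr (J n).2.nonempty
  obtain ⟨x, -, hx⟩ := hK (f := map c (⨅ n, 𝓟 (J n).1))
    (le_principal_iff.mpr (mem_map.mpr (univ_mem' hcK)))
  refine ⟨x, mem_closure_iff_clusterPt.mpr (hx.mono ?_), ?_⟩
  · exact le_principal_iff.mpr (mem_map.mpr (univ_mem' fun n => mem_range_self n))
  · rintro ⟨n, rfl⟩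
    have hUc : (U (J n) n)ᶜ ∈ map c (⨅ n, 𝓟 (J n).1) :=
      mem_iInf_of_mem (n + 1) (mem_principal.mpr (hcU (J n) n))
    obtain ⟨z, hzU, hzU'⟩ := clusterPt_iff_nonempty.mp hx (hU (J n) n) hUc
    exact hzU' hzU

theorem statement3_general (G : Type*) [CommGroup G] [TopologicalSpace G]
    (hemb : ∀ H : Subgroup G, (H : Set G).Countable → IsHEmbedded H) :
    ∀ K : Set G, IsCompact K → K.Finite := by
  refine fun K hK => not_infinite.mp fun hinf => ?_
  let c (n : ℕ) : G := hinf.natEmbedding K n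
  have hc : Function.Injective c := Subtype.val_injective.comp (hinf.natEmbedding K).injective
  let D := Subgroup.closure (range c)
  have hD : (D : Set G).Countable := Subgroup.countable_closure (countable_range c)
  obtain ⟨x, hx, hxD⟩ :=
    hK.exists_mem_closure_range_notMem (fun n => (hinf.natEmbedding K n).2) hD fun J hJ y hy => by
      have := hJ.cofinite_inf_principal_neBot
      have hne : ∀ᶠ j in cofinite ⊓ 𝓟 J, c j ≠ y :=
        (hc.tendsto_cofinite.eventually (eventually_cofinite_ne y)).filter_mono inf_le_left
      rw [Nat.cofinite_eq_atTop] at this hne ⊢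
      exact (hemb D hD).not_tendsto (fun n => Subgroup.subset_closure (mem_range_self n)) hy hne
  exact hxD ((Subgroup.isClosed_of_forall_countable_isHEmbedded hemb hD).closure_subset_iff.mpr
    Subgroup.subset_closure hx)

/-- If every countable subgroup of a topological abelian group `G` is
h-embedded in `G`, then every compact subset of `G` is finite. -/
theorem statement3 (G : Type*) [CommGroup G] [TopologicalSpace G] [IsTopologicalGroup G]
    (hemb : ∀ H : Subgroup G, (H : Set G).Countable → IsHEmbedded H) :
    ∀ K : Set G, IsCompact K → K.Finite :=
  statement3_general G hemb
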